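/- Let G be a C¹ N-function with strictly increasing derivative g = G' and indices 1 < i_G ≤ s_G < ∞, and let G̃ be the Young conjugate. Then for 0 < a < b, the quantities ∫_a^b g⁻¹(s^{1−n}) ds and ∫_{b^{1−n}}^{a^{1−n}} G̃(t)·t^{−1−n'} dt (where n' = n/(n−1), n ≥ 2) are comparable, with comparison constants depending only on i_G, s_G, and n. In particular, ∫_0^1 g⁻¹(s^{1−n}) ds < ∞ if and only if ∫_1^∞ G̃(t)/t^{1+n'} dt < ∞. -/

import Mathlib

/-!
Since `G` is convex, its tangent line at `y = g⁻¹(t)` lies below it, so the supremum defining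
`G̃(t)` is attained there: `G̃(t) = t g⁻¹(t) - G(g⁻¹(t))`. The index bound `i_G G(y) ≤ y g(y)` then
gives `(1 - 1/i_G) t g⁻¹(t) ≤ G̃(t) ≤ t g⁻¹(t)`. The substitution `t = s^{1-n}` turns
`G̃(t) t^{-1-n'} dt` into `(n-1) G̃(s^{1-n}) s^{n-1} ds`, so after it the two integrands are
pointwise comparable, with constants depending only on `i_G` and `n`.
-/

open Set MeasureTheory

theorem ConvexOn.add_mul_sub_le_of_hasDerivAt {S : Set ℝ} {f : ℝ → ℝ} {f' x y : ℝ}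
    (hf : ConvexOn ℝ S f) (hx : x ∈ S) (hy : y ∈ S) (hd : HasDerivAt f f' x) :
    f x + f' * (y - x) ≤ f y := by
  rcases lt_trichotomy x y with hxy | rfl | hyx
  · have h := hf.le_slope_of_hasDerivAt hx hy hxy hd
    rw [slope_def_field, le_div_iff₀ (sub_pos.2 hxy)] at h
    linarith
  · simp
  · have h := hf.slope_le_of_hasDerivAt hy hx hyx hd
    rw [slope_def_field, div_le_iff₀ (sub_pos.2 hyx)] at h
    linarith

noncomputable def youngConj (G : ℝ → ℝ) (s : ℝ) : ℝ :=
  sSup {z : ℝ | ∃ t, 0 < t ∧ z = s * t - G t}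

section YoungConj

variable {G : ℝ → ℝ} {s y : ℝ}

theorem isGreatest_youngConj_of_hasDerivAt (hG : ConvexOn ℝ (Ici 0) G) (hy : 0 < y)
    (hd : HasDerivAt G s y) :
    IsGreatest {z : ℝ | ∃ t, 0 < t ∧ z = s * t - G t} (s * y - G y) := by
  refine ⟨⟨y, hy, rfl⟩, ?_⟩
  rintro _ ⟨t, ht, rfl⟩
  have := hG.add_mul_sub_le_of_hasDerivAt (mem_Ici.2 hy.le) (mem_Ici.2 ht.le) hd
  linarith

theorem youngConj_eq_of_hasDerivAt (hG : ConvexOn ℝ (Ici 0) G) (hy : 0 < y)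
    (hd : HasDerivAt G s y) : youngConj G s = s * y - G y :=
  (isGreatest_youngConj_of_hasDerivAt hG hy hd).csSup_eq

theorem sub_le_youngConj_of_hasDerivAt (hG : ConvexOn ℝ (Ici 0) G) (hy : 0 < y)
    (hd : HasDerivAt G s y) {t : ℝ} (ht : 0 < t) : s * t - G t ≤ youngConj G s :=
  youngConj_eq_of_hasDerivAt hG hy hd ▸
    (isGreatest_youngConj_of_hasDerivAt hG hy hd).2 ⟨t, ht, rfl⟩

theorem youngConj_le_mul_of_hasDerivAt (hG : ConvexOn ℝ (Ici 0) G) (hy : 0 < y)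
    (hd : HasDerivAt G s y) (hGy : 0 ≤ G y) : youngConj G s ≤ s * y := by
  rw [youngConj_eq_of_hasDerivAt hG hy hd]
  linarith

theorem mul_le_youngConj_of_hasDerivAt (hG : ConvexOn ℝ (Ici 0) G) (hy : 0 < y)
    (hd : HasDerivAt G s y) {i : ℝ} (hi : 0 < i) (hiG : i * G y ≤ y * s) :
    (1 - i⁻¹) * (s * y) ≤ youngConj G s := by
  rw [youngConj_eq_of_hasDerivAt hG hy hd]
  have : G y ≤ i⁻¹ * (y * s) := by rwa [le_inv_mul_iff₀ hi]
  linarith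

theorem monotoneOn_youngConj (hG : ConvexOn ℝ (Ici 0) G)
    (hslope : ∀ s, 0 < s → ∃ y, 0 < y ∧ HasDerivAt G s y) :
    MonotoneOn (youngConj G) (Ioi 0) := by
  intro s₁ hs₁ s₂ hs₂ hle
  obtain ⟨y₁, hy₁, hd₁⟩ := hslope s₁ hs₁
  obtain ⟨y₂, hy₂, hd₂⟩ := hslope s₂ hs₂
  calc youngConj G s₁ = s₁ * y₁ - G y₁ := youngConj_eq_of_hasDerivAt hG hy₁ hd₁
    _ ≤ s₂ * y₁ - G y₁ := by gcongr
    _ ≤ youngConj G s₂ := sub_le_youngConj_of_hasDerivAt hG hy₂ hd₂ hy₁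

end YoungConj

theorem StrictMonoOn.monotoneOn_of_rightInvOn {α β : Type*} [LinearOrder α] [Preorder β]
    {f : α → β} {f' : β → α} {S : Set α} {T : Set β}
    (hf : StrictMonoOn f S) (hmaps : MapsTo f' T S) (hinv : RightInvOn f' f T) :
    MonotoneOn f' T := by
  intro t₁ ht₁ t₂ ht₂ hle
  rw [← hf.le_iff_le (hmaps ht₁) (hmaps ht₂), hinv ht₁, hinv ht₂]
  exact hle

section RpowSubstitution

variable {p : ℝ}

theorem rpow_image_Ioo_of_neg (hp : p < 0) {a b : ℝ} (ha : 0 < a) (hab : a ≤ b) :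
    (· ^ p) '' Ioo a b = Ioo (b ^ p) (a ^ p) := by
  have hsub : Icc a b ⊆ Ioi 0 := fun x hx => ha.trans_le hx.1
  exact ContinuousOn.image_Ioo_of_strictAntiOn hab
    (fun x hx => (Real.continuousAt_rpow_const _ _ (Or.inl (hsub hx).ne')).continuousWithinAt)
    ((Real.strictAntiOn_rpow_Ioi_of_exponent_neg hp).mono hsub)

theorem rpow_image_Ioo_zero_one_of_neg (hp : p < 0) :
    (· ^ p) '' Ioo (0 : ℝ) 1 = Ioi 1 := by
  refine Subset.antisymm ?_ fun t (ht : (1 : ℝ) < t) => ?_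
  · rintro _ ⟨s, hs, rfl⟩
    exact Real.one_lt_rpow_of_pos_of_lt_one_of_neg hs.1 hs.2 hp
  · refine ⟨t ^ p⁻¹,
      ⟨by positivity, Real.rpow_lt_one_of_one_lt_of_neg ht (inv_lt_zero.2 hp)⟩, ?_⟩
    simp only [← Real.rpow_mul (zero_lt_one.trans ht).le, inv_mul_cancel₀ hp.ne, Real.rpow_one]

theorem hasDerivWithinAt_rpow_const_of_subset_Ioi {S : Set ℝ} (hS : S ⊆ Ioi 0) {s : ℝ}
    (hs : s ∈ S) :
    HasDerivWithinAt (· ^ p) (p * s ^ (p - 1)) S s :=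
  (Real.hasDerivAt_rpow_const (Or.inl (hS hs).ne')).hasDerivWithinAt

theorem MonotoneOn.antitoneOn_comp_rpow {f : ℝ → ℝ} (hf : MonotoneOn f (Ioi 0)) (hp : p ≤ 0) :
    AntitoneOn (fun s => f (s ^ p)) (Ioi 0) :=
  fun _ hs₁ _ hs₂ hle => hf (Real.rpow_pos_of_pos hs₂ p) (Real.rpow_pos_of_pos hs₁ p)
    (Real.rpow_le_rpow_of_nonpos hs₁ hle hp)

theorem MonotoneOn.aemeasurable_comp_rpow {f : ℝ → ℝ} (hf : MonotoneOn f (Ioi 0))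
    (hp : p ≤ 0) {S : Set ℝ} (hS : MeasurableSet S) (hSpos : S ⊆ Ioi 0) :
    AEMeasurable (fun s => f (s ^ p)) (volume.restrict S) :=
  aemeasurable_restrict_of_antitoneOn hS ((hf.antitoneOn_comp_rpow hp).mono hSpos)

theorem MonotoneOn.integrableOn_Ioc_comp_rpow {f : ℝ → ℝ} (hf : MonotoneOn f (Ioi 0))
    (hp : p ≤ 0) {a : ℝ} (ha : 0 < a) (b : ℝ) :
    IntegrableOn (fun s => f (s ^ p)) (Ioc a b) :=
  (((hf.antitoneOn_comp_rpow hp).mono fun _ hs => ha.trans_le hs.1).integrableOn_isCompact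
    isCompact_Icc).mono_set Ioc_subset_Icc_self

variable {E : Type*} [NormedAddCommGroup E] [NormedSpace ℝ E]

theorem intervalIntegral.integral_comp_rpow_of_neg (f : ℝ → E) (hp : p < 0) {a b : ℝ}
    (ha : 0 < a) (hab : a ≤ b) :
    ∫ s in a..b, (|p| * s ^ (p - 1)) • f (s ^ p) = ∫ t in b ^ p..a ^ p, f t := by
  have hsub : Ioo a b ⊆ Ioi 0 := fun x hx => ha.trans hx.1
  rw [intervalIntegral.integral_of_le hab, intervalIntegral.integral_of_le
    (Real.rpow_le_rpow_of_nonpos ha hab hp.le), integral_Ioc_eq_integral_Ioo,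
    integral_Ioc_eq_integral_Ioo, ← rpow_image_Ioo_of_neg hp ha hab,
    integral_image_eq_integral_abs_deriv_smul measurableSet_Ioo
      (fun s hs => hasDerivWithinAt_rpow_const_of_subset_Ioi hsub hs)
      ((Real.strictAntiOn_rpow_Ioi_of_exponent_neg hp).injOn.mono hsub)]
  refine setIntegral_congr_fun measurableSet_Ioo fun s hs => ?_
  rw [abs_mul, abs_of_pos (Real.rpow_pos_of_pos (hsub hs) _)]

theorem integrableOn_Ioo_comp_rpow_iff_of_neg (f : ℝ → E) (hp : p < 0) :
    IntegrableOn (fun s => (|p| * s ^ (p - 1)) • f (s ^ p)) (Ioo 0 1) ↔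
      IntegrableOn f (Ioi 1) := by
  have hsub : Ioo (0 : ℝ) 1 ⊆ Ioi 0 := fun x hx => hx.1
  rw [← rpow_image_Ioo_zero_one_of_neg hp,
    integrableOn_image_iff_integrableOn_abs_deriv_smul measurableSet_Ioo
      (fun s hs => hasDerivWithinAt_rpow_const_of_subset_Ioi hsub hs)
      ((Real.strictAntiOn_rpow_Ioi_of_exponent_neg hp).injOn.mono hsub)]
  refine integrableOn_congr_fun (fun s hs => ?_) measurableSet_Ioo
  rw [abs_mul, abs_of_pos (Real.rpow_pos_of_pos (hsub hs) _)]

end RpowSubstitution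

def ComparableOn {α : Type*} [MeasurableSpace α] (μ : Measure α) (S : Set α) (c : ℝ)
    (F H : α → ℝ) : Prop :=
  AEStronglyMeasurable F (μ.restrict S) ∧ AEStronglyMeasurable H (μ.restrict S) ∧
    ∀ x ∈ S, 0 ≤ F x ∧ c * F x ≤ H x ∧ H x ≤ F x

namespace ComparableOn

variable {α : Type*} [MeasurableSpace α] {μ : Measure α} {S : Set α} {F H : α → ℝ} {c : ℝ}

theorem integrableOn_iff (h : ComparableOn μ S c F H) (hS : MeasurableSet S) (hc : 0 < c) :
    IntegrableOn F S μ ↔ IntegrableOn H S μ := by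
  obtain ⟨hF, hH, hFH⟩ := h
  constructor
  · refine fun hFi => hFi.mono' hH (ae_restrict_of_forall_mem hS fun x hx => ?_)
    obtain ⟨hF0, hlo, hhi⟩ := hFH x hx
    rw [Real.norm_of_nonneg (le_trans (by positivity) hlo)]
    exact hhi
  · refine fun hHi => (hHi.const_mul c⁻¹).mono' hF (ae_restrict_of_forall_mem hS fun x hx => ?_)
    rw [Real.norm_of_nonneg (hFH x hx).1, le_inv_mul_iff₀ hc]
    exact (hFH x hx).2.1

theorem setIntegral_bounds (h : ComparableOn μ S c F H) (hS : MeasurableSet S) (hc : 0 < c)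
    (hF : IntegrableOn F S μ) :
    c * ∫ x in S, F x ∂μ ≤ ∫ x in S, H x ∂μ ∧ ∫ x in S, H x ∂μ ≤ ∫ x in S, F x ∂μ := by
  have hH := (h.integrableOn_iff hS hc).1 hF
  rw [← integral_const_mul]
  exact ⟨setIntegral_mono_on (hF.const_mul c) hH hS fun x hx => (h.2.2 x hx).2.1,
    setIntegral_mono_on hH hF hS fun x hx => (h.2.2 x hx).2.2⟩

end ComparableOn

theorem inv_mul_le_and_le_mul_of_comparable {q m I K : ℝ} (hq : 0 < q) (hm : 0 < m)
    (hI : 0 ≤ I) (hlo : m * I ≤ K) (hhi : K ≤ I) :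
    (q + (q * m)⁻¹)⁻¹ * (q * K) ≤ I ∧ I ≤ (q + (q * m)⁻¹) * (q * K) := by
  have hc : 0 < q + (q * m)⁻¹ := by positivity
  have hK : 0 ≤ K := (mul_nonneg hm.le hI).trans hlo
  have hIK : I ≤ (q * m)⁻¹ * (q * K) := by
    rw [le_inv_mul_iff₀ (by positivity)]; nlinarith
  constructor
  · rw [inv_mul_le_iff₀ hc]
    nlinarith [inv_pos.2 (mul_pos hq hm)]
  · nlinarith [inv_pos.2 (mul_pos hq hm)]

-- The integrand `y(t) t^{-1-x/(x-1)}` after the substitution `t = s^{1-x}`.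
theorem abs_mul_rpow_smul_div_rpow_conj {x s : ℝ} (hx : 1 < x) (hs : 0 < s) (y : ℝ) :
    (|1 - x| * s ^ (1 - x - 1)) • (y / (s ^ (1 - x)) ^ (1 + x / (x - 1))) =
      (x - 1) * (y / s ^ (1 - x)) := by
  have hx' : x - 1 ≠ 0 := sub_ne_zero.2 hx.ne'
  have hexp : (1 - x) * (1 + x / (x - 1)) = 1 - 2 * x := by field_simp; ring
  rw [smul_eq_mul, abs_of_neg (by linarith : 1 - x < 0), ← Real.rpow_mul hs.le, hexp]
  have hpow : s ^ (1 - x - 1) / s ^ (1 - 2 * x) = (s ^ (1 - x))⁻¹ := by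
    rw [← Real.rpow_sub hs, ← Real.rpow_neg hs.le]
    ring_nf
  rw [div_eq_mul_inv y, div_eq_mul_inv y, ← hpow]
  ring

section NFunction

variable {G g ginv : ℝ → ℝ}

theorem hasDerivAt_rightInv (hderiv : ∀ t, 0 < t → HasDerivAt G (g t) t)
    (hinv : ∀ t, 0 < t → 0 < ginv t ∧ g (ginv t) = t) {t : ℝ} (ht : 0 < t) :
    HasDerivAt G t (ginv t) := by
  simpa only [(hinv t ht).2] using hderiv _ (hinv t ht).1

theorem youngConj_div_bounds (hconv : ConvexOn ℝ (Ici 0) G) (hGpos : ∀ t, 0 < t → 0 < G t)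
    (hderiv : ∀ t, 0 < t → HasDerivAt G (g t) t)
    (hinv : ∀ t, 0 < t → 0 < ginv t ∧ g (ginv t) = t) {i : ℝ} (hi : 0 < i)
    (hindex : ∀ y, 0 < y → i * G y ≤ y * g y) {t : ℝ} (ht : 0 < t) :
    (1 - i⁻¹) * ginv t ≤ youngConj G t / t ∧ youngConj G t / t ≤ ginv t := by
  obtain ⟨hy, hgy⟩ := hinv t ht
  have hd := hasDerivAt_rightInv hderiv hinv ht
  have hlo := mul_le_youngConj_of_hasDerivAt hconv hy hd hi (by simpa only [hgy] using hindex _ hy)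
  have hhi := youngConj_le_mul_of_hasDerivAt hconv hy hd (hGpos _ hy).le
  rw [le_div_iff₀ ht, div_le_iff₀ ht]
  constructor <;> linarith

theorem comparableOn_ginv_youngConj_comp_rpow (hconv : ConvexOn ℝ (Ici 0) G)
    (hGpos : ∀ t, 0 < t → 0 < G t) (hderiv : ∀ t, 0 < t → HasDerivAt G (g t) t)
    (hinv : ∀ t, 0 < t → 0 < ginv t ∧ g (ginv t) = t) (hginv : MonotoneOn ginv (Ioi 0))
    {i : ℝ} (hi : 0 < i) (hindex : ∀ y, 0 < y → i * G y ≤ y * g y) {p : ℝ} (hp : p ≤ 0)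
    {S : Set ℝ} (hS : MeasurableSet S) (hSpos : S ⊆ Ioi 0) :
    ComparableOn volume S (1 - i⁻¹) (fun s => ginv (s ^ p))
      (fun s => youngConj G (s ^ p) / s ^ p) := by
  have hGc : MonotoneOn (youngConj G) (Ioi 0) := monotoneOn_youngConj hconv fun t ht =>
    ⟨ginv t, (hinv t ht).1, hasDerivAt_rightInv hderiv hinv ht⟩
  refine ⟨(hginv.aemeasurable_comp_rpow hp hS hSpos).aestronglyMeasurable,
    ((hGc.aemeasurable_comp_rpow hp hS hSpos).div
      (measurable_id.pow_const p).aemeasurable).aestronglyMeasurable, fun s hs => ?_⟩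
  have ht : 0 < s ^ p := Real.rpow_pos_of_pos (hSpos hs) p
  exact ⟨(hinv _ ht).1.le, youngConj_div_bounds hconv hGpos hderiv hinv hi hindex ht⟩

end NFunction

theorem wolff_integral_comparison_general
    (n : ℕ) (hn : 2 ≤ n)
    (G g ginv Gc : ℝ → ℝ) (iG sG : ℝ)
    (hGpos : ∀ t, 0 < t → 0 < G t)
    (hconv : ConvexOn ℝ (Set.Ici 0) G)
    (hderiv : ∀ t, 0 < t → HasDerivAt G (g t) t)
    (hgmono : StrictMonoOn g (Set.Ioi 0))
    (h1 : 1 < iG)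
    (hbounds : ∀ t, 0 < t → iG ≤ t * g t / G t ∧ t * g t / G t ≤ sG)
    (hinv : ∀ t, 0 < t → 0 < ginv t ∧ g (ginv t) = t)
    (hconj : ∀ s, Gc s = sSup {y : ℝ | ∃ t, 0 < t ∧ y = s * t - G t}) :
    (∃ c > 0, ∀ a b : ℝ, 0 < a → a < b →
      c⁻¹ * ∫ t in (b ^ ((1:ℝ) - n))..(a ^ ((1:ℝ) - n)), Gc t / t ^ (1 + (n:ℝ)/((n:ℝ) - 1))
          ≤ (∫ s in a..b, ginv (s ^ ((1:ℝ) - n))) ∧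
      (∫ s in a..b, ginv (s ^ ((1:ℝ) - n)))
          ≤ c * ∫ t in (b ^ ((1:ℝ) - n))..(a ^ ((1:ℝ) - n)), Gc t / t ^ (1 + (n:ℝ)/((n:ℝ) - 1))) ∧
    (MeasureTheory.IntegrableOn (fun s : ℝ => ginv (s ^ ((1:ℝ) - n))) (Set.Ioc 0 1) ↔
      MeasureTheory.IntegrableOn (fun t : ℝ => Gc t / t ^ (1 + (n:ℝ)/((n:ℝ) - 1))) (Set.Ici 1)) := by
  obtain rfl : Gc = youngConj G := funext hconj
  have hn1 : (1 : ℝ) < n := by exact_mod_cast hn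
  have hp : (1 : ℝ) - n < 0 := by linarith
  have hq : (0 : ℝ) < n - 1 := by linarith
  have hc : 0 < 1 - iG⁻¹ := by simp [inv_lt_one_of_one_lt₀ h1]
  have hginv : MonotoneOn ginv (Ioi 0) :=
    hgmono.monotoneOn_of_rightInvOn (fun t ht => (hinv t ht).1) fun t ht => (hinv t ht).2
  have hcmp {S : Set ℝ} (hS : MeasurableSet S) (hSpos : S ⊆ Ioi 0) :=
    comparableOn_ginv_youngConj_comp_rpow hconv hGpos hderiv hinv hginv (zero_lt_one.trans h1)
      (fun t ht => (le_div_iff₀ (hGpos t ht)).1 (hbounds t ht).1) hp.le hS hSpos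
  have hsubst (s : ℝ) (hs : 0 < s) :=
    abs_mul_rpow_smul_div_rpow_conj hn1 hs (youngConj G (s ^ ((1 : ℝ) - n)))
  refine ⟨⟨n - 1 + ((n - 1) * (1 - iG⁻¹))⁻¹, by positivity, fun a b ha hab => ?_⟩, ?_⟩
  · have hSpos : Ioc a b ⊆ Ioi 0 := fun s hs => ha.trans hs.1
    have hF := hginv.integrableOn_Ioc_comp_rpow hp.le ha b
    rw [← intervalIntegral.integral_comp_rpow_of_neg _ hp ha hab.le,
      intervalIntegral.integral_of_le hab.le, intervalIntegral.integral_of_le hab.le,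
      setIntegral_congr_fun measurableSet_Ioc fun s hs => hsubst s (hSpos hs), integral_const_mul]
    have hcmpI := hcmp measurableSet_Ioc hSpos
    obtain ⟨hlo, hhi⟩ := hcmpI.setIntegral_bounds measurableSet_Ioc hc hF
    exact inv_mul_le_and_le_mul_of_comparable hq hc
        (setIntegral_nonneg measurableSet_Ioc fun s hs => (hcmpI.2.2 s hs).1) hlo hhi
  · rw [integrableOn_Ioc_iff_integrableOn_Ioo, integrableOn_Ici_iff_integrableOn_Ioi,
      ← integrableOn_Ioo_comp_rpow_iff_of_neg _ hp,
      integrableOn_congr_fun (fun s hs => hsubst s hs.1) measurableSet_Ioo,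
      IntegrableOn, IntegrableOn, integrable_const_mul_iff hq.ne'.isUnit]
    exact (hcmp measurableSet_Ioo fun s hs => hs.1).integrableOn_iff measurableSet_Ioo hc

/-- For a C¹ N-function `G` with strictly increasing `g = G'`, indices
`1 < i_G ≤ s_G < ∞`, and Young conjugate `Gc`, the quantities
`∫_a^b g⁻¹(s^{1-n}) ds` and `∫_{b^{1-n}}^{a^{1-n}} Gc(t) t^{-1-n'} dt`
(`n' = n/(n-1)`) are comparable for all `0 < a < b`, with constants
depending only on `i_G`, `s_G`, `n`; in particular the corresponding
integrability conditions are equivalent. -/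
theorem wolff_integral_comparison
    (n : ℕ) (hn : 2 ≤ n)
    (G g ginv Gc : ℝ → ℝ) (iG sG : ℝ)
    (hG0 : G 0 = 0)
    (hGpos : ∀ t, 0 < t → 0 < G t)
    (hconv : ConvexOn ℝ (Set.Ici 0) G)
    (hlim0 : Filter.Tendsto (fun t => G t / t) (nhdsWithin 0 (Set.Ioi 0)) (nhds 0))
    (hlimtop : Filter.Tendsto (fun t => G t / t) Filter.atTop Filter.atTop)
    (hderiv : ∀ t, 0 < t → HasDerivAt G (g t) t)
    (hgmono : StrictMonoOn g (Set.Ioi 0))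
    (h1 : 1 < iG) (h2 : iG ≤ sG)
    (hbounds : ∀ t, 0 < t → iG ≤ t * g t / G t ∧ t * g t / G t ≤ sG)
    (hinv : ∀ t, 0 < t → 0 < ginv t ∧ g (ginv t) = t)
    (hinv' : ∀ t, 0 < t → ginv (g t) = t)
    (hconj : ∀ s, Gc s = sSup {y : ℝ | ∃ t, 0 < t ∧ y = s * t - G t}) :
    (∃ c > 0, ∀ a b : ℝ, 0 < a → a < b →
      c⁻¹ * ∫ t in (b ^ ((1:ℝ) - n))..(a ^ ((1:ℝ) - n)), Gc t / t ^ (1 + (n:ℝ)/((n:ℝ) - 1))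
          ≤ (∫ s in a..b, ginv (s ^ ((1:ℝ) - n))) ∧
      (∫ s in a..b, ginv (s ^ ((1:ℝ) - n)))
          ≤ c * ∫ t in (b ^ ((1:ℝ) - n))..(a ^ ((1:ℝ) - n)), Gc t / t ^ (1 + (n:ℝ)/((n:ℝ) - 1))) ∧
    (MeasureTheory.IntegrableOn (fun s : ℝ => ginv (s ^ ((1:ℝ) - n))) (Set.Ioc 0 1) ↔
      MeasureTheory.IntegrableOn (fun t : ℝ => Gc t / t ^ (1 + (n:ℝ)/((n:ℝ) - 1))) (Set.Ici 1)) :=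
  wolff_integral_comparison_general n hn G g ginv Gc iG sG hGpos hconv hderiv hgmono h1 hbounds hinv
    hconj
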